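/- Let r ≥ 1, d = 2^r - 1, and let P be the d × d 0-1 matrix whose j-th row consists of the indicator coefficients b_{K,k}(j) of the dyadic decomposition of (0, j2^{-r}] into odd dyadic blocks (at most one block per scale K = 0,…,r-1). Then P is invertible with determinant 1, and for any x, y ∈ ℝ^d, the supremum distance satisfies max_j |(P(u - v))_j| ≤ ∑_{K=0}^{r-1} max_{k ∈ 𝓔(K)} |u^{(K,k)} - v^{(K,k)}|, where u = P^{-1}x, v = P^{-1}y and coordinates are indexed by (K,k) with k ∈ 𝓔(K) the odd integers in [1, 2^{r-K}-1]. In particular, every function f that is 1-Lipschitz for the sup-norm on ℝ^d induces a function f∘P that is 1-Lipschitz for the distance d*(u,v) = ∑_K max_k |u^{(K,k)} - v^{(K,k)}|. -/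

import Mathlib

/-!
Write a column index as `n = k 2^K` with `k` odd. A block `(K, k)` of the decomposition of
`(0, j 2⁻ʳ]` has right end `k 2^(K-r) ≤ j 2⁻ʳ`, and the point `j 2⁻ʳ` lies in some block, whose
right end is then exactly `j 2⁻ʳ`. So row `j` of `P` vanishes beyond column `j` and has a `1` in
column `j`: `P` is lower unitriangular and `det P = 1`. Since a row of `P` is a 0-1 vector with at
most one `1` per scale `K`, `|(P w)_j|` is at most the sum over the scales of the largest `|w_c|`
at that scale; both Lipschitz bounds are this estimate for `w = u - v`.
-/

open Finset Matrix

section LevelBound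

variable {ι m n κ : Type*} [DecidableEq κ]

theorem abs_sum_le_of_subsingleton_support {s : Finset ι} {f : ι → ℝ} {M : ℝ} (hM : 0 ≤ M)
    (hf : ∀ c ∈ s, |f c| ≤ M) (hsub : ∀ c ∈ s, ∀ c' ∈ s, f c ≠ 0 → f c' ≠ 0 → c = c') :
    |∑ c ∈ s, f c| ≤ M := by
  by_cases h : ∃ c ∈ s, f c ≠ 0
  · obtain ⟨c, hc, hfc⟩ := h
    rw [sum_eq_single_of_mem c hc fun c' hc' hne =>
      by_contra fun hfc' => hne (hsub c' hc' c hc hfc' hfc)]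
    exact hf c hc
  · push Not at h
    rw [sum_eq_zero h, abs_zero]
    exact hM

theorem iSup_ite_abs_nonneg (lev : n → κ) (w : n → ℝ) (K : κ) :
    0 ≤ ⨆ c, if lev c = K then |w c| else 0 :=
  Real.iSup_nonneg fun c => by split_ifs <;> positivity

theorem abs_mulVec_le_sum_iSup_level [Fintype n] (P : Matrix m n ℝ) (lev : n → κ) (s : Finset κ)
    (hlev : ∀ c, lev c ∈ s) (hP : ∀ j c, |P j c| ≤ 1)
    (hsingle : ∀ j c c', P j c ≠ 0 → P j c' ≠ 0 → lev c = lev c' → c = c')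
    (w : n → ℝ) (j : m) :
    |(P *ᵥ w) j| ≤ ∑ K ∈ s, ⨆ c, if lev c = K then |w c| else 0 := by
  rw [mulVec, dotProduct, ← sum_fiberwise_of_maps_to (fun c _ => hlev c)]
  refine (abs_sum_le_sum_abs _ _).trans (sum_le_sum fun K _ => ?_)
  refine abs_sum_le_of_subsingleton_support (iSup_ite_abs_nonneg lev w K) (fun c hc => ?_)
    fun c hc c' hc' h h' => hsingle j c c' (left_ne_zero_of_mul h) (left_ne_zero_of_mul h')
      ((mem_filter.1 hc).2.trans (mem_filter.1 hc').2.symm)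
  calc |P j c * w c| = |P j c| * |w c| := abs_mul _ _
    _ ≤ |w c| := mul_le_of_le_one_left (abs_nonneg _) (hP j c)
    _ = if lev c = K then |w c| else 0 := (if_pos (mem_filter.1 hc).2).symm
    _ ≤ ⨆ c, if lev c = K then |w c| else 0 :=
      le_ciSup (f := fun c => if lev c = K then |w c| else 0) (Set.finite_range _).bddAbove c

theorem iSup_abs_mulVec_le_sum_iSup_level [Fintype n] (P : Matrix m n ℝ) (lev : n → κ) (s : Finset κ)
    (hlev : ∀ c, lev c ∈ s) (hP : ∀ j c, |P j c| ≤ 1)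
    (hsingle : ∀ j c c', P j c ≠ 0 → P j c' ≠ 0 → lev c = lev c' → c = c') (w : n → ℝ) :
    ⨆ j, |(P *ᵥ w) j| ≤ ∑ K ∈ s, ⨆ c, if lev c = K then |w c| else 0 :=
  Real.iSup_le (abs_mulVec_le_sum_iSup_level P lev s hlev hP hsingle w)
    (sum_nonneg fun K _ => iSup_ite_abs_nonneg lev w K)

end LevelBound

section DyadicBlock

/-- The pair `(K, k)` with `n = k 2^K` and `k` odd (for `n ≠ 0`). -/
def dyadicBlock (n : ℕ) : ℕ × ℕ := (padicValNat 2 n, n / 2 ^ padicValNat 2 n)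

theorem dyadicBlock_snd_mul_two_pow_fst (n : ℕ) :
    (dyadicBlock n).2 * 2 ^ (dyadicBlock n).1 = n :=
  Nat.div_mul_cancel pow_padicValNat_dvd

theorem dyadicBlock_injective : Function.Injective dyadicBlock := fun a b h => by
  rw [← dyadicBlock_snd_mul_two_pow_fst a, ← dyadicBlock_snd_mul_two_pow_fst b, h]

theorem dyadicBlock_mul_two_pow_of_odd {k : ℕ} (hk : Odd k) (K : ℕ) :
    dyadicBlock (k * 2 ^ K) = (K, k) := by
  have hK : padicValNat 2 (k * 2 ^ K) = K := by
    rw [padicValNat.mul hk.pos.ne' (by positivity), padicValNat.prime_pow,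
      padicValNat.eq_zero_of_not_dvd hk.not_two_dvd_nat, zero_add]
  simp only [dyadicBlock, hK, Nat.mul_div_cancel _ (by positivity : 0 < 2 ^ K)]

theorem dyadicBlock_fst_lt {n r : ℕ} (hn : n ≠ 0) (h : n < 2 ^ r) : (dyadicBlock n).1 < r :=
  (padicValNat_le_nat_log n).trans_lt (Nat.log_lt_of_lt_pow hn h)

end DyadicBlock

section DyadicCover

def IsDyadicCover (r n : ℕ) (β : ℕ → ℕ → Bool) : Prop :=
  Set.Ioc (0 : ℝ) ((n : ℝ) * 2 ^ (-(r : ℤ))) =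
    ⋃ K : ℕ, ⋃ k ∈ {k : ℕ | β K k = true},
      Set.Ioc (((k : ℝ) - 1) * 2 ^ ((K : ℤ) - (r : ℤ))) ((k : ℝ) * 2 ^ ((K : ℤ) - (r : ℤ)))

theorem natCast_mul_two_zpow_sub (k K r : ℕ) :
    (k : ℝ) * 2 ^ ((K : ℤ) - r) = ((k * 2 ^ K : ℕ) : ℝ) * 2 ^ (-(r : ℤ)) := by
  rw [sub_eq_add_neg, zpow_add₀ two_ne_zero, zpow_natCast]
  push_cast
  ring

namespace IsDyadicCover

variable {r n : ℕ} {β : ℕ → ℕ → Bool}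

theorem mul_two_pow_le (h : IsDyadicCover r n β) {K k : ℕ} (hβ : β K k = true) :
    k * 2 ^ K ≤ n := by
  have hmem : (k : ℝ) * 2 ^ ((K : ℤ) - r) ∈ Set.Ioc (0 : ℝ) ((n : ℝ) * 2 ^ (-(r : ℤ))) := by
    rw [h]
    refine Set.mem_iUnion₂.2 ⟨K, k, Set.mem_iUnion.2 ⟨hβ, ?_, le_rfl⟩⟩
    exact mul_lt_mul_of_pos_right (sub_one_lt _) (zpow_pos two_pos _)
  rw [natCast_mul_two_zpow_sub] at hmem
  exact_mod_cast le_of_mul_le_mul_right hmem.2 (zpow_pos two_pos _)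

theorem exists_mul_two_pow_eq (h : IsDyadicCover r n β) (hn : 0 < n) :
    ∃ K k, β K k = true ∧ k * 2 ^ K = n := by
  have hmem : (n : ℝ) * 2 ^ (-(r : ℤ)) ∈ Set.Ioc (0 : ℝ) ((n : ℝ) * 2 ^ (-(r : ℤ))) :=
    ⟨by positivity, le_rfl⟩
  rw [h] at hmem
  simp only [Set.mem_iUnion] at hmem
  obtain ⟨K, k, hβ, hmem⟩ := hmem
  rw [natCast_mul_two_zpow_sub] at hmem
  have hge : n ≤ k * 2 ^ K := by
    exact_mod_cast le_of_mul_le_mul_right hmem.2 (zpow_pos two_pos _)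
  exact ⟨K, k, hβ, (h.mul_two_pow_le hβ).antisymm hge⟩

end IsDyadicCover

end DyadicCover

section DyadicMatrix

variable {r d : ℕ} {b : ℕ → ℕ → ℕ → Bool} {P : Matrix (Fin d) (Fin d) ℝ}

theorem isLowerTriangular_of_isDyadicCover
    (hP : ∀ j c : Fin d, P j c =
      if b ((j : ℕ) + 1) (dyadicBlock ((c : ℕ) + 1)).1 (dyadicBlock ((c : ℕ) + 1)).2 = true
        then 1 else 0)
    (hcover : ∀ j : Fin d, IsDyadicCover r ((j : ℕ) + 1) (b ((j : ℕ) + 1))) :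
    P.IsLowerTriangular := by
  intro j c hjc
  rw [hP]
  refine if_neg fun hb => ?_
  have hle := (hcover j).mul_two_pow_le hb
  rw [dyadicBlock_snd_mul_two_pow_fst] at hle
  have hjc : (j : ℕ) < c := OrderDual.toDual_lt_toDual.1 hjc
  omega

theorem diag_eq_one_of_isDyadicCover
    (hP : ∀ j c : Fin d, P j c =
      if b ((j : ℕ) + 1) (dyadicBlock ((c : ℕ) + 1)).1 (dyadicBlock ((c : ℕ) + 1)).2 = true
        then 1 else 0)
    (hcover : ∀ j : Fin d, IsDyadicCover r ((j : ℕ) + 1) (b ((j : ℕ) + 1)))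
    (hodd : ∀ (j : Fin d) K k, b ((j : ℕ) + 1) K k = true → Odd k) (j : Fin d) :
    P j j = 1 := by
  obtain ⟨K, k, hb, hkK⟩ := (hcover j).exists_mul_two_pow_eq j.succ_pos
  have hblock : dyadicBlock ((j : ℕ) + 1) = (K, k) :=
    hkK ▸ dyadicBlock_mul_two_pow_of_odd (hodd j K k hb) K
  rw [hP, hblock]
  exact if_pos hb

theorem det_eq_one_of_isDyadicCover
    (hP : ∀ j c : Fin d, P j c =
      if b ((j : ℕ) + 1) (dyadicBlock ((c : ℕ) + 1)).1 (dyadicBlock ((c : ℕ) + 1)).2 = true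
        then 1 else 0)
    (hcover : ∀ j : Fin d, IsDyadicCover r ((j : ℕ) + 1) (b ((j : ℕ) + 1)))
    (hodd : ∀ (j : Fin d) K k, b ((j : ℕ) + 1) K k = true → Odd k) :
    P.det = 1 := by
  rw [det_of_isLowerTriangular P (isLowerTriangular_of_isDyadicCover hP hcover)]
  exact prod_eq_one fun j _ => diag_eq_one_of_isDyadicCover hP hcover hodd j

theorem eq_of_ne_zero_of_dyadicBlock_fst_eq
    (hP : ∀ j c : Fin d, P j c =
      if b ((j : ℕ) + 1) (dyadicBlock ((c : ℕ) + 1)).1 (dyadicBlock ((c : ℕ) + 1)).2 = true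
        then 1 else 0)
    (hunique : ∀ n K k k', b n K k = true → b n K k' = true → k = k')
    {j c c' : Fin d} (hc : P j c ≠ 0) (hc' : P j c' ≠ 0)
    (hK : (dyadicBlock ((c : ℕ) + 1)).1 = (dyadicBlock ((c' : ℕ) + 1)).1) : c = c' := by
  rw [hP] at hc hc'
  have hb := (ite_ne_right_iff.1 hc).1
  have hb' := (ite_ne_right_iff.1 hc').1
  rw [← hK] at hb'
  have hk := hunique _ _ _ _ hb hb'
  exact Fin.ext (Nat.succ_injective (dyadicBlock_injective (Prod.ext hK hk)))

end DyadicMatrix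

theorem dyadic_matrix_det_one_and_lipschitz_general
    (r : ℕ) (d : ℕ) (hd : d = 2 ^ r - 1)
    (b : ℕ → ℕ → ℕ → Bool)
    (hb1 : ∀ j K k, 1 ≤ j → j ≤ 2 ^ r - 1 → b j K k = true →
      K < r ∧ Odd k ∧ 1 ≤ k ∧ k ≤ 2 ^ (r - K) - 1)
    (hb2 : ∀ j K k k', b j K k = true → b j K k' = true → k = k')
    (hb3 : ∀ j, 1 ≤ j → j ≤ 2 ^ r - 1 →
      ((Set.univ : Set (ℕ × ℕ)).PairwiseDisjoint
        (fun p : ℕ × ℕ =>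
          if b j p.1 p.2 = true then
            Set.Ioc (((p.2 : ℝ) - 1) * 2 ^ ((p.1 : ℤ) - (r : ℤ)))
              ((p.2 : ℝ) * 2 ^ ((p.1 : ℤ) - (r : ℤ)))
          else ∅)) ∧
      Set.Ioc (0 : ℝ) ((j : ℝ) * 2 ^ (-(r : ℤ))) =
        ⋃ K : ℕ, ⋃ k ∈ {k : ℕ | b j K k = true},
          Set.Ioc (((k : ℝ) - 1) * 2 ^ ((K : ℤ) - (r : ℤ)))
            ((k : ℝ) * 2 ^ ((K : ℤ) - (r : ℤ))))
    (P : Matrix (Fin d) (Fin d) ℝ)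
    (hP : ∀ j c : Fin d, P j c =
      if b ((j : ℕ) + 1) (padicValNat 2 ((c : ℕ) + 1))
          (((c : ℕ) + 1) / 2 ^ padicValNat 2 ((c : ℕ) + 1)) = true
        then 1 else 0) :
    P.det = 1 ∧
    (∀ x y : Fin d → ℝ,
      (⨆ j : Fin d, |P.mulVec (P⁻¹.mulVec x - P⁻¹.mulVec y) j|) ≤
        ∑ K ∈ Finset.range r, ⨆ c : Fin d,
          (if padicValNat 2 ((c : ℕ) + 1) = K
            then |P⁻¹.mulVec x c - P⁻¹.mulVec y c| else 0)) ∧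
    (∀ f : (Fin d → ℝ) → ℝ,
      (∀ x y : Fin d → ℝ, |f x - f y| ≤ ⨆ i, |x i - y i|) →
      ∀ u v : Fin d → ℝ,
        |f (P.mulVec u) - f (P.mulVec v)| ≤
          ∑ K ∈ Finset.range r, ⨆ c : Fin d,
            (if padicValNat 2 ((c : ℕ) + 1) = K then |u c - v c| else 0)) := by
  have hrow (j : Fin d) : 1 ≤ (j : ℕ) + 1 ∧ (j : ℕ) + 1 ≤ 2 ^ r - 1 := by omega
  have hlev (c : Fin d) : padicValNat 2 ((c : ℕ) + 1) ∈ range r :=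
    mem_range.2 (dyadicBlock_fst_lt (Nat.succ_ne_zero _) (by omega))
  have habs (j c : Fin d) : |P j c| ≤ 1 := by
    rw [hP]
    split_ifs <;> simp
  have hbound := iSup_abs_mulVec_le_sum_iSup_level P _ _ hlev habs
    fun j c c' => eq_of_ne_zero_of_dyadicBlock_fst_eq hP hb2
  refine ⟨det_eq_one_of_isDyadicCover hP (fun j => (hb3 _ (hrow j).1 (hrow j).2).2)
    (fun j K k hb => (hb1 _ _ _ (hrow j).1 (hrow j).2 hb).2.1), fun x y => hbound _, ?_⟩
  intro f hf u v
  calc |f (P *ᵥ u) - f (P *ᵥ v)| ≤ ⨆ i, |(P *ᵥ u) i - (P *ᵥ v) i| := hf _ _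
    _ = ⨆ i, |(P *ᵥ (u - v)) i| := by simp only [mulVec_sub, Pi.sub_apply]
    _ ≤ _ := hbound (u - v)

/-- the 0-1 matrix `P` whose row `j` encodes the dyadic decomposition of
`(0, (j+1)2^{-r}]` into odd dyadic blocks (columns are indexed by `c`, the column `c`
corresponding to the block `(K,k)` with `k 2^K = c+1`, `k` odd) is invertible with
determinant `1`; moreover `max_j |(P(u-v))_j| ≤ ∑_K max_{k at level K} |u_{(K,k)} - v_{(K,k)}|`
for `u = P⁻¹ x`, `v = P⁻¹ y`, so that any `f` 1-Lipschitz for the sup-norm yields `f ∘ P`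
1-Lipschitz for the distance `d*(u,v) = ∑_K max_k |u^{(K,k)} - v^{(K,k)}|`. -/
theorem dyadic_matrix_det_one_and_lipschitz
    (r : ℕ) (hr : 1 ≤ r) (d : ℕ) (hd : d = 2 ^ r - 1)
    (b : ℕ → ℕ → ℕ → Bool)
    (hb1 : ∀ j K k, 1 ≤ j → j ≤ 2 ^ r - 1 → b j K k = true →
      K < r ∧ Odd k ∧ 1 ≤ k ∧ k ≤ 2 ^ (r - K) - 1)
    (hb2 : ∀ j K k k', b j K k = true → b j K k' = true → k = k')
    (hb3 : ∀ j, 1 ≤ j → j ≤ 2 ^ r - 1 →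
      ((Set.univ : Set (ℕ × ℕ)).PairwiseDisjoint
        (fun p : ℕ × ℕ =>
          if b j p.1 p.2 = true then
            Set.Ioc (((p.2 : ℝ) - 1) * 2 ^ ((p.1 : ℤ) - (r : ℤ)))
              ((p.2 : ℝ) * 2 ^ ((p.1 : ℤ) - (r : ℤ)))
          else ∅)) ∧
      Set.Ioc (0 : ℝ) ((j : ℝ) * 2 ^ (-(r : ℤ))) =
        ⋃ K : ℕ, ⋃ k ∈ {k : ℕ | b j K k = true},
          Set.Ioc (((k : ℝ) - 1) * 2 ^ ((K : ℤ) - (r : ℤ)))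
            ((k : ℝ) * 2 ^ ((K : ℤ) - (r : ℤ))))
    (P : Matrix (Fin d) (Fin d) ℝ)
    (hP : ∀ j c : Fin d, P j c =
      if b ((j : ℕ) + 1) (padicValNat 2 ((c : ℕ) + 1))
          (((c : ℕ) + 1) / 2 ^ padicValNat 2 ((c : ℕ) + 1)) = true
        then 1 else 0) :
    P.det = 1 ∧
    (∀ x y : Fin d → ℝ,
      (⨆ j : Fin d, |P.mulVec (P⁻¹.mulVec x - P⁻¹.mulVec y) j|) ≤
        ∑ K ∈ Finset.range r, ⨆ c : Fin d,
          (if padicValNat 2 ((c : ℕ) + 1) = K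
            then |P⁻¹.mulVec x c - P⁻¹.mulVec y c| else 0)) ∧
    (∀ f : (Fin d → ℝ) → ℝ,
      (∀ x y : Fin d → ℝ, |f x - f y| ≤ ⨆ i, |x i - y i|) →
      ∀ u v : Fin d → ℝ,
        |f (P.mulVec u) - f (P.mulVec v)| ≤
          ∑ K ∈ Finset.range r, ⨆ c : Fin d,
            (if padicValNat 2 ((c : ℕ) + 1) = K then |u c - v c| else 0)) :=
  dyadic_matrix_det_one_and_lipschitz_general r d hd b hb1 hb2 hb3 P hP
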